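/- For all M ∈ GL(V) and all symmetric 2-tensors C on V, conjugating the section An(C) by M equals the section of the transformed tensor: ActSec(M, An(C)) = An((M ⊗ M)C), where (M ⊗ M)C is the pushforward tensor satisfying ((M⊗M)C)k = M(C(k∘M)). -/
import Mathlib


variable {V : Type*} [AddCommGroup V] [Module ℝ V] [FiniteDimensional ℝ V]

/-- The underlying set of the oscillator group: GL(V) × V* × V × ℝ. -/
abbrev Osc (V : Type*) [AddCommGroup V] [Module ℝ V] : Type _ :=
  (V ≃ₗ[ℝ] V) × Module.Dual ℝ V × V × ℝ

/-- (L, j, u, a) • (M, k, v, b) = (LM, j∘M + k, u + Lv, a + b + j(v)). -/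
def oscMul (g h : Osc V) : Osc V :=
  (h.1.trans g.1, g.2.1 ∘ₗ h.1.toLinearMap + h.2.1, g.2.2.1 + g.1 h.2.2.1,
    g.2.2.2 + h.2.2.2 + g.2.1 h.2.2.1)

/-- The identity element (id, 0, 0, 0). -/
def oscId : Osc V := (LinearEquiv.refl ℝ V, 0, 0, 0)

/-- The inverse (M⁻¹, -k∘M⁻¹, -M⁻¹v, -b + k(M⁻¹v)). -/
def oscInv (g : Osc V) : Osc V :=
  (g.1.symm, -(g.2.1 ∘ₗ g.1.symm.toLinearMap), -(g.1.symm g.2.2.1),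
    -g.2.2.2 + g.2.1 (g.1.symm g.2.2.1))

/-- The annihilation section An(C)(k) = (id, k, Ck, ½ k(Ck)). -/
noncomputable def An (C : Module.Dual ℝ V →ₗ[ℝ] V) : Module.Dual ℝ V → Osc V :=
  fun k => (LinearEquiv.refl ℝ V, k, C k, (1/2) * k (C k))

/-- The pushforward tensor (M⊗M)C, as a linear map V* → V: k ↦ M(C(k∘M)). -/
def push (M : V ≃ₗ[ℝ] V) (C : Module.Dual ℝ V →ₗ[ℝ] V) : Module.Dual ℝ V →ₗ[ℝ] V :=
  M.toLinearMap ∘ₗ C ∘ₗ M.toLinearMap.dualMap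

/-- Conjugating the section An(C) by M in Osc(V) yields the section An((M⊗M)C). -/
theorem ActSec_An (M : V ≃ₗ[ℝ] V) (C : Module.Dual ℝ V →ₗ[ℝ] V)
    (hC : ∀ j k : Module.Dual ℝ V, j (C k) = k (C j)) :
    ∀ k : Module.Dual ℝ V,
      oscMul (oscMul (M, 0, 0, 0) (An C (k ∘ₗ M.toLinearMap))) (M.symm, 0, 0, 0) =
        An (push M C) k := by
  intro k
  have h : (M.toLinearMap).dualMap k = k ∘ₗ M.toLinearMap := rfl
  simp only [oscMul, An, push]
  refine Prod.ext ?_ (Prod.ext ?_ (Prod.ext ?_ ?_))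
  · ext v; simp
  · ext v; simp
  · simp [LinearMap.comp_apply, h]
  · simp [LinearMap.comp_apply, h]
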